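/- Let n ≥ 2, a > 0, and α = (α_1,…,α_n) ∈ (0,∞)^n with a α_k < 1 for all k; set β_k := (1 − a α_k)/α_k. Let μ ∈ ℝ^n and let Σ ∈ ℝ^{n×n} be a diagonal matrix with nonnegative diagonal entries Σ_{kk}. For θ ∈ ℝ^n put z_k := i μ_k θ_k − ½ θ_k² Σ_{kk}. Then ∫_{(0,∞)^{n+1}} exp(Σ_{k=1}^n z_k (α_k s_0 + s_k)) γ_0(ds_0) γ_1(ds_1) ⋯ γ_n(ds_n) = exp(−a Log(1 − i⟨α⋄μ, θ⟩ + ½‖θ‖²_{α⋄Σ}) − Σ_{k=1}^n β_k Log(1 − i α_k μ_k θ_k + ½ α_k θ_k² Σ_{kk})), where γ_0 is the Gamma distribution with shape a and rate 1, and γ_k is the Gamma distribution with shape β_k and rate 1/α_k for 1 ≤ k ≤ n. -/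

import Mathlib

open MeasureTheory Complex

noncomputable section

/-- Euclidean inner product on `ℝ^n`. -/
def dot {n : ℕ} (x y : Fin n → ℝ) : ℝ := ∑ k, x k * y k

/-- Quadratic form `‖θ‖²_A = θ A θᵀ`. -/
def quad {n : ℕ} (A : Matrix (Fin n) (Fin n) ℝ) (θ : Fin n → ℝ) : ℝ :=
  ∑ k, ∑ l, θ k * A k l * θ l

/-- Outer product `t ⋄ μ` of vectors, `(t ⋄ μ)_k = t_k μ_k`. -/
def diaV {n : ℕ} (t μ : Fin n → ℝ) : Fin n → ℝ := fun k => t k * μ k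

/-- Outer product `t ⋄ Σ`, `(t ⋄ Σ)_{kl} = Σ_{kl} min(t_k, t_l)`. -/
def diaM {n : ℕ} (t : Fin n → ℝ) (A : Matrix (Fin n) (Fin n) ℝ) :
    Matrix (Fin n) (Fin n) ℝ := Matrix.of fun k l => A k l * min (t k) (t l)

/-- Lévy exponent of the weak variance-alpha-gamma process `WVAG^n(a, α, μ, Σ)`:
`Ψ(θ) = -a Log(1 - i⟨α⋄μ,θ⟩ + ½‖θ‖²_{α⋄Σ}) - ∑ₖ βₖ Log(1 - i αₖ μₖ θₖ + ½ αₖ θₖ² Σₖₖ)`,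
where `βₖ = (1 - a αₖ)/αₖ`. -/
def Ψwvag {n : ℕ} (a : ℝ) (α μ : Fin n → ℝ) (S : Matrix (Fin n) (Fin n) ℝ)
    (θ : Fin n → ℝ) : ℂ :=
  -(a : ℂ) * Complex.log (1 - Complex.I * (dot (diaV α μ) θ : ℂ) +
      (quad (diaM α S) θ : ℂ) / 2) -
    ∑ k, (((1 - a * α k) / α k : ℝ) : ℂ) *
      Complex.log (1 - Complex.I * ((α k * μ k * θ k : ℝ) : ℂ) +
        ((α k * θ k ^ 2 * S k k : ℝ) : ℂ) / 2)

open ProbabilityTheory Set Filter Topology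

/-! The exponent splits as `∑ₖ zₖ(αₖ s₀ + sₖ) = (∑ₖ αₖ zₖ) s₀ + ∑ₖ zₖ sₖ`, so under the product
measure the integral is a product of complex moment generating functions of Gamma laws. For
`Γ(p, r)` this is `(1 - z/r)^(-p)` on the half-plane `Re z < r`: on the real axis it follows by
exponential tilting, `x^(p-1) e^(-rx) e^(tx) ∝ x^(p-1) e^(-(r-t)x)`, and both sides are analytic in
`z`. For diagonal `Σ`, `1 - ∑ₖ αₖ zₖ` is exactly `1 - i⟨α⋄μ,θ⟩ + ½‖θ‖²_{α⋄Σ}`. -/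

lemma eqOn_complexMGF_of_forall_ofReal {Ω : Type*} [MeasurableSpace Ω] {X : Ω → ℝ}
    {μ : Measure Ω} {s : Set ℝ} {g : ℂ → ℂ} (hs : IsOpen s) (hsc : Convex ℝ s)
    (hsX : s ⊆ integrableExpSet X μ) (hg : AnalyticOnNhd ℂ g {z | z.re ∈ s})
    (hreal : ∀ t ∈ s, complexMGF X μ t = g t) :
    EqOn (complexMGF X μ) g {z | z.re ∈ s} := by
  intro z hz
  have hf : AnalyticOnNhd ℂ (complexMGF X μ) {z | z.re ∈ s} :=
    analyticOnNhd_complexMGF.mono fun w hw => interior_maximal hsX hs hw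
  have hofReal : Tendsto ((↑) : ℝ → ℂ) (𝓝[≠] z.re) (𝓝[≠] (z.re : ℂ)) :=
    continuous_ofReal.continuousWithinAt.tendsto_nhdsWithin
      fun x hx => by simpa using hx
  have hfreq : ∃ᶠ x : ℝ in 𝓝[≠] z.re, complexMGF X μ x = g x :=
    (eventually_nhdsWithin_of_eventually_nhds (hs.mem_nhds hz)).mono hreal |>.frequently
  exact hf.eqOn_of_preconnected_of_frequently_eq hg (hsc.linear_preimage reLm).isPreconnected
    (by simpa using hz) (hofReal.frequently hfreq) hz

lemma gammaPDFReal_mul_exp_mul {p r t : ℝ} (hr : 0 ≤ r) (ht : t < r) (x : ℝ) :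
    gammaPDFReal p r x * Real.exp (t * x) = (r / (r - t)) ^ p * gammaPDFReal p (r - t) x := by
  have hrt : 0 < r - t := sub_pos.2 ht
  unfold gammaPDFReal
  split_ifs
  · rw [Real.div_rpow hr hrt.le, show -(r * x) = -((r - t) * x) - t * x by ring, Real.exp_sub]
    field_simp
  · simp

lemma lintegral_exp_mul_gammaMeasure {p r t : ℝ} (hp : 0 < p) (hr : 0 < r) (ht : t < r) :
    ∫⁻ x, ENNReal.ofReal (Real.exp (t * x)) ∂gammaMeasure p r =
      ENNReal.ofReal ((r / (r - t)) ^ p) := by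
  have htilt : ∀ x, gammaPDF p r x * ENNReal.ofReal (Real.exp (t * x)) =
      ENNReal.ofReal ((r / (r - t)) ^ p) * gammaPDF p (r - t) x := fun x => by
    rw [gammaPDF, gammaPDF, ← ENNReal.ofReal_mul (gammaPDFReal_nonneg hp hr x),
      gammaPDFReal_mul_exp_mul hr.le ht, ENNReal.ofReal_mul (by positivity)]
  rw [gammaMeasure, lintegral_withDensity_eq_lintegral_mul _ (f := gammaPDF p r)
    (measurable_gammaPDFReal p r).ennreal_ofReal (by fun_prop)]
  simp only [Pi.mul_apply, htilt]
  rw [lintegral_const_mul' _ _ ENNReal.ofReal_ne_top,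
    lintegral_gammaPDF_eq_one hp (sub_pos.2 ht), mul_one]

lemma integrable_exp_mul_gammaMeasure {p r t : ℝ} (hp : 0 < p) (hr : 0 < r) (ht : t < r) :
    Integrable (fun x => Real.exp (t * x)) (gammaMeasure p r) := by
  refine ⟨by fun_prop, ?_⟩
  rw [hasFiniteIntegral_iff_ofReal (ae_of_all _ fun x => (Real.exp_pos _).le),
    lintegral_exp_mul_gammaMeasure hp hr ht]
  exact ENNReal.ofReal_lt_top

lemma mgf_id_gammaMeasure {p r t : ℝ} (hp : 0 < p) (hr : 0 < r) (ht : t < r) :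
    mgf id (gammaMeasure p r) t = (r / (r - t)) ^ p := by
  rw [mgf, integral_eq_lintegral_of_nonneg_ae (ae_of_all _ fun x => (Real.exp_pos _).le)
    (by fun_prop)]
  simp only [id, lintegral_exp_mul_gammaMeasure hp hr ht]
  exact ENNReal.toReal_ofReal (by have := sub_pos.2 ht; positivity)

theorem complexMGF_id_gammaMeasure {p r : ℝ} (hp : 0 < p) (hr : 0 < r) {z : ℂ} (hz : z.re < r) :
    complexMGF id (gammaMeasure p r) z = cexp (-p * log (1 - z / r)) := by
  have hslit : ∀ w : ℂ, w.re < r → 1 - w / r ∈ slitPlane := fun w hw => by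
    refine mem_slitPlane_iff.2 (Or.inl ?_)
    rw [sub_re, one_re, div_ofReal_re, sub_pos]
    exact (div_lt_one hr).2 hw
  refine eqOn_complexMGF_of_forall_ofReal (X := id) (g := fun z => cexp (-p * log (1 - z / r)))
    isOpen_Iio (convex_Iio r) (fun t ht => integrable_exp_mul_gammaMeasure hp hr ht) ?_
    (fun t ht => ?_) hz
  · exact fun w hw => (analyticAt_const.mul ((analyticAt_const.sub
      (analyticAt_id.div_const (c := (r : ℂ)))).clog (hslit w hw))).cexp
  · have h1 : 0 < 1 - t / r := sub_pos.2 ((div_lt_one hr).2 ht)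
    rw [complexMGF_ofReal, mgf_id_gammaMeasure hp hr ht,
      show r / (r - t) = (1 - t / r)⁻¹ by field_simp, Real.inv_rpow h1.le, ← Real.rpow_neg h1.le,
      ofReal_cpow h1.le, cpow_def_of_ne_zero (by exact_mod_cast h1.ne')]
    push_cast
    ring_nf

instance (p r : ℝ) : SigmaFinite (gammaMeasure p r) :=
  SigmaFinite.withDensity_of_ne_top' fun _ => ENNReal.ofReal_ne_top

lemma integral_cexp_sum_mul_pi {ι : Type*} [Fintype ι] (ν : ι → Measure ℝ)
    [∀ i, SigmaFinite (ν i)] (c : ι → ℂ) :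
    ∫ x : ι → ℝ, cexp (∑ i, c i * x i) ∂Measure.pi ν = ∏ i, complexMGF id (ν i) (c i) := by
  simp_rw [exp_sum]
  exact integral_fintype_prod_eq_prod (μ := ν) fun i (x : ℝ) => cexp (c i * x)

theorem integral_cexp_alphaGamma {n : ℕ} {a : ℝ} (ha : 0 < a) {α β : Fin n → ℝ}
    (hα : ∀ k, 0 < α k) (hβ : ∀ k, 0 < β k) {z : Fin n → ℂ} (hz : ∀ k, (z k).re ≤ 0) :
    ∫ s : Fin (n + 1) → ℝ, cexp (∑ k, z k * ((α k * s 0 + s k.succ : ℝ) : ℂ))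
        ∂Measure.pi (fun i => Fin.cases (gammaMeasure a 1)
          (fun k => gammaMeasure (β k) (1 / α k)) i) =
      cexp (-a * log (1 - ∑ k, α k * z k)) * ∏ k, cexp (-β k * log (1 - α k * z k)) := by
  have hsplit : ∀ s : Fin (n + 1) → ℝ, ∑ k, z k * ((α k * s 0 + s k.succ : ℝ) : ℂ) =
      ∑ i, (Fin.cons (∑ k, α k * z k) z : Fin (n + 1) → ℂ) i * s i := fun s => by
    rw [Fin.sum_univ_succ, Fin.cons_zero, Finset.sum_mul, ← Finset.sum_add_distrib]
    refine Finset.sum_congr rfl fun k _ => ?_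
    rw [Fin.cons_succ]
    push_cast
    ring
  have hw : (∑ k, α k * z k).re < 1 := by
    rw [re_sum]
    refine (Finset.sum_nonpos fun k _ => ?_).trans_lt one_pos
    rw [re_ofReal_mul]
    exact mul_nonpos_of_nonneg_of_nonpos (hα k).le (hz k)
  have hzk : ∀ k, (z k).re < 1 / α k := fun k => (hz k).trans_lt (one_div_pos.2 (hα k))
  have : ∀ i, SigmaFinite (Fin.cases (gammaMeasure a 1)
      (fun k => gammaMeasure (β k) (1 / α k)) i : Measure ℝ) :=
    Fin.cases (by rw [Fin.cases_zero]; infer_instance)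
      fun k => by rw [Fin.cases_succ]; infer_instance
  simp_rw [hsplit]
  rw [integral_cexp_sum_mul_pi, Fin.prod_univ_succ]
  simp only [Fin.cases_zero, Fin.cases_succ, Fin.cons_zero, Fin.cons_succ]
  rw [complexMGF_id_gammaMeasure ha one_pos hw, ofReal_one, div_one]
  congr 1
  refine Finset.prod_congr rfl fun k _ => ?_
  rw [complexMGF_id_gammaMeasure (hβ k) (one_div_pos.2 (hα k)) (hzk k), ofReal_div, ofReal_one,
    div_div_eq_mul_div, div_one, mul_comm (z k)]

lemma quad_diaM_of_offDiag_eq_zero {n : ℕ} (t : Fin n → ℝ) {A : Matrix (Fin n) (Fin n) ℝ}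
    (hA : ∀ k l, k ≠ l → A k l = 0) (θ : Fin n → ℝ) :
    quad (diaM t A) θ = ∑ k, t k * θ k ^ 2 * A k k := by
  refine Finset.sum_congr rfl fun k _ => ?_
  rw [Finset.sum_eq_single k (fun l _ hlk => by simp [diaM, hA k l hlk.symm]) (by simp)]
  simp only [diaM, Matrix.of_apply, min_self]
  ring

theorem stmt13_general {n : ℕ} (a : ℝ) (ha : 0 < a) (α : Fin n → ℝ)
    (hα : ∀ k, 0 < α k) (hsmall : ∀ k, a * α k < 1) (μ : Fin n → ℝ)
    (S : Matrix (Fin n) (Fin n) ℝ) (hdiag : ∀ k l, k ≠ l → S k l = 0)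
    (hnn : ∀ k, 0 ≤ S k k) (θ : Fin n → ℝ) :
    ∫ s : Fin (n + 1) → ℝ,
        Complex.exp (∑ k : Fin n,
          (Complex.I * ((μ k * θ k : ℝ) : ℂ) - ((θ k ^ 2 * S k k : ℝ) : ℂ) / 2) *
            ((α k * s 0 + s k.succ : ℝ) : ℂ))
      ∂(Measure.pi (fun i : Fin (n + 1) =>
          Fin.cases (ProbabilityTheory.gammaMeasure a 1)
            (fun k => ProbabilityTheory.gammaMeasure ((1 - a * α k) / α k) (1 / α k)) i)) =
      Complex.exp (Ψwvag a α μ S θ) := by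
  set z : Fin n → ℂ := fun k => I * ((μ k * θ k : ℝ) : ℂ) - ((θ k ^ 2 * S k k : ℝ) : ℂ) / 2
    with hz
  have hzre : ∀ k, (z k).re ≤ 0 := fun k => by
    simp only [hz, sub_re, mul_re, I_re, I_im, ofReal_re, ofReal_im, div_ofNat_re]
    linarith [mul_nonneg (sq_nonneg (θ k)) (hnn k)]
  have hβ : ∀ k, 0 < (1 - a * α k) / α k := fun k => div_pos (sub_pos.2 (hsmall k)) (hα k)
  have hsum : 1 - ∑ k, (α k : ℂ) * z k =
      1 - I * dot (diaV α μ) θ + quad (diaM α S) θ / 2 := by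
    rw [quad_diaM_of_offDiag_eq_zero α hdiag, dot]
    simp only [hz, diaV]
    push_cast
    rw [Finset.mul_sum, Finset.sum_div, sub_add, ← Finset.sum_sub_distrib]
    congr 1
    exact Finset.sum_congr rfl fun k _ => by ring
  have hk : ∀ k, 1 - (α k : ℂ) * z k =
      1 - I * ((α k * μ k * θ k : ℝ) : ℂ) + ((α k * θ k ^ 2 * S k k : ℝ) : ℂ) / 2 := fun k => by
    simp only [hz]
    push_cast
    ring
  rw [integral_cexp_alphaGamma ha hα hβ hzre, hsum, Ψwvag, sub_eq_add_neg (_ * _), exp_add,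
    ← Finset.sum_neg_distrib, exp_sum]
  simp only [hk, neg_mul]

/-- For diagonal `Σ`, the characteristic function at time 1 of the strong subordination
`B ∘ T` of `B ~ BM^n(μ,Σ)` (independent components) by the alpha-gamma subordinator
`T = G₀α + (G₁,…,Gₙ)` equals the characteristic function of `WVAG^n(a,α,μ,Σ)`:
mixing `exp(∑ₖ zₖ(αₖ s₀ + sₖ))`, `zₖ = iμₖθₖ - ½θₖ²Σₖₖ`, over independent Gamma
distributions `γ₀ = Γ(a,1)`, `γₖ = Γ(βₖ, 1/αₖ)` yields `exp(Ψ_{WVAG}(θ))`. -/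
theorem stmt13 {n : ℕ} (hn : 2 ≤ n) (a : ℝ) (ha : 0 < a) (α : Fin n → ℝ)
    (hα : ∀ k, 0 < α k) (hsmall : ∀ k, a * α k < 1) (μ : Fin n → ℝ)
    (S : Matrix (Fin n) (Fin n) ℝ) (hdiag : ∀ k l, k ≠ l → S k l = 0)
    (hnn : ∀ k, 0 ≤ S k k) (θ : Fin n → ℝ) :
    ∫ s : Fin (n + 1) → ℝ,
        Complex.exp (∑ k : Fin n,
          (Complex.I * ((μ k * θ k : ℝ) : ℂ) - ((θ k ^ 2 * S k k : ℝ) : ℂ) / 2) *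
            ((α k * s 0 + s k.succ : ℝ) : ℂ))
      ∂(Measure.pi (fun i : Fin (n + 1) =>
          Fin.cases (ProbabilityTheory.gammaMeasure a 1)
            (fun k => ProbabilityTheory.gammaMeasure ((1 - a * α k) / α k) (1 / α k)) i)) =
      Complex.exp (Ψwvag a α μ S θ) :=
  stmt13_general a ha α hα hsmall μ S hdiag hnn θ
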